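/- Let n ≥ 1 and let q ∈ ℂ be nonzero and not a root of unity. Then the group of graded ℂ-algebra automorphisms of 𝔥_n(q) (those automorphisms φ with φ(V) = V) is isomorphic as a group to the semidirect product ((Fin n → ℂˣ) × (Fin n → ℂˣ)) ⋊ Equiv.Perm (Fin n), where a permutation acts on a pair of tuples by permuting the coordinates of both tuples simultaneously. -/

import Mathlib

noncomputable section

open scoped BigOperators

namespace QHeisenberg

/-- Index type for the `3n` generators: `x`-, `y`-, and `z`-variables. -/
abbrev GenIdx (n : ℕ) := Fin n ⊕ (Fin n ⊕ Fin n)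

/-- The `x_i` generator in the free algebra. -/
def fX (n : ℕ) (i : Fin n) : FreeAlgebra ℂ (GenIdx n) := FreeAlgebra.ι ℂ (Sum.inl i)

/-- The `y_i` generator in the free algebra. -/
def fY (n : ℕ) (i : Fin n) : FreeAlgebra ℂ (GenIdx n) := FreeAlgebra.ι ℂ (Sum.inr (Sum.inl i))

/-- The `z_i` generator in the free algebra. -/
def fZ (n : ℕ) (i : Fin n) : FreeAlgebra ℂ (GenIdx n) := FreeAlgebra.ι ℂ (Sum.inr (Sum.inr i))

/-- The defining relations of the q-Heisenberg algebra `𝔥_n(q)`. -/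
inductive Rel (n : ℕ) (q : ℂ) :
    FreeAlgebra ℂ (GenIdx n) → FreeAlgebra ℂ (GenIdx n) → Prop
  | xx (i j : Fin n) : Rel n q (fX n i * fX n j) (fX n j * fX n i)
  | yy (i j : Fin n) : Rel n q (fY n i * fY n j) (fY n j * fY n i)
  | zz (i j : Fin n) : Rel n q (fZ n i * fZ n j) (fZ n j * fZ n i)
  | xz (i : Fin n) : Rel n q (fX n i * fZ n i) (q • (fZ n i * fX n i))
  | yz (i : Fin n) : Rel n q (fY n i * fZ n i) (q⁻¹ • (fZ n i * fY n i))
  | xy (i : Fin n) : Rel n q (fX n i * fY n i) (q⁻¹ • (fY n i * fX n i) + fZ n i)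
  | xyne (i j : Fin n) : i ≠ j → Rel n q (fX n i * fY n j) (fY n j * fX n i)
  | xzne (i j : Fin n) : i ≠ j → Rel n q (fX n i * fZ n j) (fZ n j * fX n i)
  | yzne (i j : Fin n) : i ≠ j → Rel n q (fY n i * fZ n j) (fZ n j * fY n i)

/-- The q-Heisenberg algebra `𝔥_n(q)`. -/
abbrev H (n : ℕ) (q : ℂ) := RingQuot (Rel n q)

/-- The generator `x_i` of `𝔥_n(q)`. -/
def X (n : ℕ) (q : ℂ) (i : Fin n) : H n q := RingQuot.mkAlgHom ℂ (Rel n q) (fX n i)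

/-- The generator `y_i` of `𝔥_n(q)`. -/
def Y (n : ℕ) (q : ℂ) (i : Fin n) : H n q := RingQuot.mkAlgHom ℂ (Rel n q) (fY n i)

/-- The generator `z_i` of `𝔥_n(q)`. -/
def Z (n : ℕ) (q : ℂ) (i : Fin n) : H n q := RingQuot.mkAlgHom ℂ (Rel n q) (fZ n i)

/-- `q` is not a root of unity: `q ^ k ≠ 1` for every `k ≥ 1`. -/
def NotRootOfUnity (q : ℂ) : Prop := ∀ k : ℕ, 1 ≤ k → q ^ k ≠ 1

end QHeisenberg

namespace QHeisenberg

/-- The `ℂ`-linear span `V` of the `3n` generators `x_i, y_i, z_i` of `𝔥_n(q)`. -/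
def genSpan (n : ℕ) (q : ℂ) : Submodule ℂ (H n q) :=
  Submodule.span ℂ (Set.range (X n q) ∪ Set.range (Y n q) ∪ Set.range (Z n q))

/-- The group of graded `ℂ`-algebra automorphisms of `𝔥_n(q)`: those `φ` with
`φ(V) = V`. -/
def gradedAut (n : ℕ) (q : ℂ) : Subgroup (H n q ≃ₐ[ℂ] H n q) where
  carrier := { φ | Submodule.map φ.toLinearMap (genSpan n q) = genSpan n q }
  one_mem' := by
    show Submodule.map (1 : H n q ≃ₐ[ℂ] H n q).toLinearMap (genSpan n q) = genSpan n q
    have h : (1 : H n q ≃ₐ[ℂ] H n q).toLinearMap = LinearMap.id := LinearMap.ext fun x => rfl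
    rw [h, Submodule.map_id]
  mul_mem' := by
    intro a b ha hb
    show Submodule.map (a * b).toLinearMap (genSpan n q) = genSpan n q
    have h : (a * b).toLinearMap = a.toLinearMap.comp b.toLinearMap :=
      LinearMap.ext fun x => rfl
    rw [h, Submodule.map_comp]
    rw [show Submodule.map b.toLinearMap (genSpan n q) = genSpan n q from hb]
    exact ha
  inv_mem' := by
    intro a ha
    show Submodule.map a⁻¹.toLinearMap (genSpan n q) = genSpan n q
    conv_lhs => rw [← show Submodule.map a.toLinearMap (genSpan n q) = genSpan n q from ha]
    rw [← Submodule.map_comp]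
    have h : (a⁻¹.toLinearMap).comp a.toLinearMap = LinearMap.id :=
      LinearMap.ext fun x => a.symm_apply_apply x
    rw [h, Submodule.map_id]

/-- The action of `Equiv.Perm (Fin n)` on pairs of tuples of units, permuting the
coordinates of both tuples simultaneously. -/
def permAction (n : ℕ) : Equiv.Perm (Fin n) →* MulAut ((Fin n → ℂˣ) × (Fin n → ℂˣ)) where
  toFun π :=
    { toFun := fun p => (p.1 ∘ π.symm, p.2 ∘ π.symm)
      invFun := fun p => (p.1 ∘ π, p.2 ∘ π)
      left_inv := by intro p; ext i <;> simp
      right_inv := by intro p; ext i <;> simp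
      map_mul' := by intro p r; ext i <;> simp }
  map_one' := by
    ext p i <;> simp <;> rfl
  map_mul' := by
    intro π σ
    ext p i <;> simp [Equiv.Perm.mul_def]

/-!
Every character of `𝔥_n(q)` kills the `z_i` (as `q ≠ 1`), so a graded automorphism `φ` maps the
span of the `z_i` into itself. To read off coefficients, let `𝔥_n(q)` act on the Laurent
polynomials `ℂ[t₁^{±1}, …, tₙ^{±1}]`: `x_j` lowers and `y_j` raises the degree in `t_j`, and `z_j`
multiplies `t^μ` by `q^{μ_j}`. There the generators are linearly independent, and a relation
`u w = λ w u` with `w` in the span of the `z_k` ties the coefficients of `u` to the eigenvalues of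
`w`. Applied to `φ x_i · φ z_i = q φ z_i · φ x_i` and `φ y_i · φ z_i = q⁻¹ φ z_i · φ y_i`, this
puts `φ z_i`, `φ x_i`, `φ y_i` on the lines through `z_t`, `x_t`, `y_t` for a single `t = π i`.
Conversely every rescaling-and-permuting of the generators is a graded automorphism, and these
compose as in the semidirect product.
-/

section Relations

variable {n : ℕ} {q : ℂ}

lemma X_mul_X_comm (i j : Fin n) : X n q i * X n q j = X n q j * X n q i := by
  simpa only [map_mul, X] using RingQuot.mkAlgHom_rel ℂ (Rel.xx (q := q) i j)

lemma Y_mul_Y_comm (i j : Fin n) : Y n q i * Y n q j = Y n q j * Y n q i := by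
  simpa only [map_mul, Y] using RingQuot.mkAlgHom_rel ℂ (Rel.yy (q := q) i j)

lemma Z_mul_Z_comm (i j : Fin n) : Z n q i * Z n q j = Z n q j * Z n q i := by
  simpa only [map_mul, Z] using RingQuot.mkAlgHom_rel ℂ (Rel.zz (q := q) i j)

lemma X_mul_Z (i : Fin n) : X n q i * Z n q i = q • (Z n q i * X n q i) := by
  simpa only [map_mul, map_smul, X, Z] using RingQuot.mkAlgHom_rel ℂ (Rel.xz (q := q) i)

lemma Y_mul_Z (i : Fin n) : Y n q i * Z n q i = q⁻¹ • (Z n q i * Y n q i) := by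
  simpa only [map_mul, map_smul, Y, Z] using RingQuot.mkAlgHom_rel ℂ (Rel.yz (q := q) i)

lemma X_mul_Y (i : Fin n) : X n q i * Y n q i = q⁻¹ • (Y n q i * X n q i) + Z n q i := by
  simpa only [map_mul, map_smul, map_add, X, Y, Z] using
    RingQuot.mkAlgHom_rel ℂ (Rel.xy (q := q) i)

lemma X_mul_Y_comm_of_ne {i j : Fin n} (h : i ≠ j) :
    X n q i * Y n q j = Y n q j * X n q i := by
  simpa only [map_mul, X, Y] using RingQuot.mkAlgHom_rel ℂ (Rel.xyne (q := q) i j h)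

lemma X_mul_Z_comm_of_ne {i j : Fin n} (h : i ≠ j) :
    X n q i * Z n q j = Z n q j * X n q i := by
  simpa only [map_mul, X, Z] using RingQuot.mkAlgHom_rel ℂ (Rel.xzne (q := q) i j h)

lemma Y_mul_Z_comm_of_ne {i j : Fin n} (h : i ≠ j) :
    Y n q i * Z n q j = Z n q j * Y n q i := by
  simpa only [map_mul, Y, Z] using RingQuot.mkAlgHom_rel ℂ (Rel.yzne (q := q) i j h)

lemma Z_eq (i : Fin n) : Z n q i = X n q i * Y n q i - q⁻¹ • (Y n q i * X n q i) := by
  rw [X_mul_Y, add_sub_cancel_left]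

lemma algHom_ext {A : Type*} [Ring A] [Algebra ℂ A] {f g : H n q →ₐ[ℂ] A}
    (hX : ∀ i, f (X n q i) = g (X n q i)) (hY : ∀ i, f (Y n q i) = g (Y n q i)) : f = g := by
  refine RingQuot.ringQuot_ext' ℂ f g (FreeAlgebra.hom_ext (funext ?_))
  rintro (i | i | i)
  · exact hX i
  · exact hY i
  · change f (Z n q i) = g (Z n q i)
    simp only [Z_eq, map_sub, map_smul, map_mul, hX, hY]

variable {A : Type*} [Semiring A] [Algebra ℂ A]

def liftGens (f : GenIdx n → A)
    (hf : ∀ ⦃a b⦄, Rel n q a b → FreeAlgebra.lift ℂ f a = FreeAlgebra.lift ℂ f b) :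
    H n q →ₐ[ℂ] A :=
  RingQuot.liftAlgHom ℂ ⟨FreeAlgebra.lift ℂ f, hf⟩

variable (f : GenIdx n → A)
  (hf : ∀ ⦃a b⦄, Rel n q a b → FreeAlgebra.lift ℂ f a = FreeAlgebra.lift ℂ f b)

@[simp] lemma liftGens_X (i : Fin n) : liftGens f hf (X n q i) = f (Sum.inl i) := by
  simp [liftGens, X, fX]

@[simp] lemma liftGens_Y (i : Fin n) : liftGens f hf (Y n q i) = f (Sum.inr (Sum.inl i)) := by
  simp [liftGens, Y, fY]

@[simp] lemma liftGens_Z (i : Fin n) : liftGens f hf (Z n q i) = f (Sum.inr (Sum.inr i)) := by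
  simp [liftGens, Z, fZ]

end Relations

section WeightedShift

variable {M R : Type*} [AddCommMonoid M] [CommSemiring R]

def weightedShift (d : M) (w : M → R) : Module.End R (M →₀ R) :=
  Finsupp.lift (M →₀ R) R M fun μ => Finsupp.single (μ + d) (w μ)

@[simp] lemma weightedShift_single (d : M) (w : M → R) (μ : M) (r : R) :
    weightedShift d w (Finsupp.single μ r) = Finsupp.single (μ + d) (r * w μ) := by
  rw [weightedShift, Finsupp.lift_apply, Finsupp.sum_single_index (by simp),
    Finsupp.smul_single', mul_comm]

lemma weightedShift_zero_apply (w : M → R) (f : M →₀ R) (ν : M) :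
    weightedShift 0 w f ν = w ν * f ν := by
  induction f using Finsupp.induction_linear with
  | zero => simp
  | add f g hf hg => simp [hf, hg, mul_add]
  | single μ r =>
    rw [weightedShift_single, add_zero]
    by_cases h : μ = ν
    · subst h
      simp [mul_comm]
    · simp [h]

end WeightedShift

section Representation

variable {n : ℕ} {q : ℂ}

lemma ne_one_of_sq_ne_one (hq2 : q ^ 2 ≠ 1) : q ≠ 1 := by
  rintro rfl
  simp at hq2

lemma one_sub_inv_sq_ne_zero (hq2 : q ^ 2 ≠ 1) : 1 - q⁻¹ ^ 2 ≠ 0 := by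
  rwa [sub_ne_zero, ne_comm, inv_pow, inv_ne_one]

lemma single_one_ne_neg_single_one {α : Type*} (j k : α) :
    (Finsupp.single j 1 : α →₀ ℤ) ≠ -Finsupp.single k 1 := by
  rw [← Finsupp.single_neg, Ne, Finsupp.single_eq_single_iff]
  omega

-- The factor `(1 - q⁻²)⁻¹` is what makes `x_j y_j - q⁻¹ y_j x_j = z_j` hold; indexing by `ℤⁿ`
-- rather than `ℕⁿ` leaves no boundary terms, so every relation is an identity of weights.
variable (q) in
def repGens : GenIdx n → Module.End ℂ ((Fin n →₀ ℤ) →₀ ℂ)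
  | Sum.inl j => weightedShift (-Finsupp.single j 1) 1
  | Sum.inr (Sum.inl j) => weightedShift (Finsupp.single j 1) fun μ => (1 - q⁻¹ ^ 2)⁻¹ * q ^ μ j
  | Sum.inr (Sum.inr j) => weightedShift 0 fun μ => q ^ μ j

lemma repGens_respects_rel (hq : q ≠ 0) (hq2 : q ^ 2 ≠ 1) ⦃a b : FreeAlgebra ℂ (GenIdx n)⦄
    (h : Rel n q a b) : FreeAlgebra.lift ℂ (repGens q) a = FreeAlgebra.lift ℂ (repGens q) b := by
  have hκ := one_sub_inv_sq_ne_zero hq2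
  induction h <;> refine Finsupp.lhom_ext fun μ r => ?_ <;>
    simp only [map_mul, map_smul, map_add, Module.End.mul_apply, LinearMap.smul_apply,
      LinearMap.add_apply, FreeAlgebra.lift_ι_apply, fX, fY, fZ, repGens, weightedShift_single,
      Finsupp.smul_single', Finsupp.coe_add, Finsupp.coe_neg, Pi.add_apply, Pi.neg_apply,
      Pi.one_apply, add_zero, mul_one]
  case xx => rw [add_right_comm]
  case yy i j =>
    rcases eq_or_ne i j with rfl | hij
    · rfl
    · rw [add_right_comm, Finsupp.single_eq_of_ne hij, Finsupp.single_eq_of_ne hij.symm,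
        add_zero, add_zero, mul_right_comm]
  case zz => rw [mul_right_comm]
  case xz =>
    rw [Finsupp.single_eq_same, zpow_add₀ hq, zpow_neg_one]
    field_simp
  case yz =>
    rw [Finsupp.single_eq_same, zpow_add_one₀ hq]
    field_simp
  case xy =>
    rw [add_neg_cancel_right, neg_add_cancel_right, ← Finsupp.single_add, Finsupp.single_eq_same,
      zpow_add₀ hq, zpow_neg_one]
    congr 1
    field_simp
    ring
  case xyne i j hij => rw [add_right_comm, Finsupp.single_eq_of_ne hij.symm, neg_zero, add_zero]
  case xzne i j hij => rw [Finsupp.single_eq_of_ne hij.symm, neg_zero, add_zero]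
  case yzne i j hij => rw [Finsupp.single_eq_of_ne hij.symm, add_zero, mul_right_comm]

def rep (hq : q ≠ 0) (hq2 : q ^ 2 ≠ 1) : H n q →ₐ[ℂ] Module.End ℂ ((Fin n →₀ ℤ) →₀ ℂ) :=
  liftGens (repGens q) (repGens_respects_rel hq hq2)

variable (q) in
def genComb (a b c : Fin n → ℂ) : H n q :=
  ∑ j, a j • X n q j + ∑ j, b j • Y n q j + ∑ j, c j • Z n q j

variable (q) in
def zWeight (γ : Fin n → ℂ) (μ : Fin n →₀ ℤ) : ℂ := ∑ k, γ k * q ^ μ k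

lemma zWeight_zero (γ : Fin n → ℂ) : zWeight q γ 0 = ∑ k, γ k := by
  simp [zWeight]

lemma zWeight_add_single (hq : q ≠ 0) (γ : Fin n → ℂ) (μ : Fin n →₀ ℤ) (k : Fin n) (m : ℤ) :
    zWeight q γ (μ + Finsupp.single k m) = zWeight q γ μ + γ k * q ^ μ k * (q ^ m - 1) := by
  have term (j : Fin n) : γ j * q ^ (μ + Finsupp.single k m) j =
      γ j * q ^ μ j + if j = k then γ k * q ^ μ k * (q ^ m - 1) else 0 := by
    rcases eq_or_ne j k with rfl | h
    · simp only [Finsupp.coe_add, Pi.add_apply, Finsupp.single_eq_same, zpow_add₀ hq, if_pos]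
      ring
    · simp [Finsupp.single_eq_of_ne h, h]
  simp only [zWeight, term, Finset.sum_add_distrib, Finset.sum_ite_eq', Finset.mem_univ, if_true]

lemma zWeight_single (hq : q ≠ 0) (γ : Fin n → ℂ) (k : Fin n) (m : ℤ) :
    zWeight q γ (Finsupp.single k m) = ∑ j, γ j + γ k * (q ^ m - 1) := by
  simpa [zWeight_zero] using zWeight_add_single hq γ 0 k m

lemma zWeight_injective (hq : q ≠ 0) (hq1 : q ≠ 1) {γ γ' : Fin n → ℂ}
    (h : ∀ μ, zWeight q γ μ = zWeight q γ' μ) : γ = γ' := by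
  funext k
  have hk := h (0 + Finsupp.single k 1)
  rw [zWeight_add_single hq, zWeight_add_single hq, h 0] at hk
  simpa [sub_ne_zero.2 hq1] using hk

lemma rep_genComb_single (hq : q ≠ 0) (hq2 : q ^ 2 ≠ 1) (a b c : Fin n → ℂ) (μ : Fin n →₀ ℤ) :
    rep hq hq2 (genComb q a b c) (Finsupp.single μ 1) =
      ∑ j, Finsupp.single (μ - Finsupp.single j 1) (a j) +
      ∑ j, Finsupp.single (μ + Finsupp.single j 1) (b j * ((1 - q⁻¹ ^ 2)⁻¹ * q ^ μ j)) +
      Finsupp.single μ (zWeight q c μ) := by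
  simp only [rep, genComb, map_add, map_sum, map_smul, liftGens_X, liftGens_Y, liftGens_Z,
    repGens, LinearMap.add_apply, LinearMap.coe_sum, Finset.sum_apply, LinearMap.smul_apply,
    weightedShift_single, Finsupp.smul_single', one_mul, mul_one, Pi.one_apply, add_zero,
    sub_eq_add_neg, zWeight, Finsupp.single_finsetSum]

lemma rep_genComb_apply_sub (hq : q ≠ 0) (hq2 : q ^ 2 ≠ 1) (a b c : Fin n → ℂ)
    (μ : Fin n →₀ ℤ) (t : Fin n) :
    rep hq hq2 (genComb q a b c) (Finsupp.single μ 1) (μ - Finsupp.single t 1) = a t := by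
  simp [rep_genComb_single, Finsupp.single_apply, sub_eq_add_neg,
    Finsupp.single_eq_single_iff, (single_one_ne_neg_single_one _ _).symm]

lemma rep_genComb_apply_add (hq : q ≠ 0) (hq2 : q ^ 2 ≠ 1) (a b c : Fin n → ℂ)
    (μ : Fin n →₀ ℤ) (t : Fin n) :
    rep hq hq2 (genComb q a b c) (Finsupp.single μ 1) (μ + Finsupp.single t 1) =
      b t * ((1 - q⁻¹ ^ 2)⁻¹ * q ^ μ t) := by
  simp [rep_genComb_single, Finsupp.single_apply, sub_eq_add_neg,
    Finsupp.single_eq_single_iff, single_one_ne_neg_single_one]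

lemma rep_genComb_apply_self (hq : q ≠ 0) (hq2 : q ^ 2 ≠ 1) (a b c : Fin n → ℂ)
    (μ : Fin n →₀ ℤ) : rep hq hq2 (genComb q a b c) (Finsupp.single μ 1) μ = zWeight q c μ := by
  simp [rep_genComb_single, sub_eq_add_neg]

lemma rep_sum_smul_Z (hq : q ≠ 0) (hq2 : q ^ 2 ≠ 1) (γ : Fin n → ℂ) :
    rep hq hq2 (∑ k, γ k • Z n q k) = weightedShift 0 (zWeight q γ) := by
  refine Finsupp.lhom_ext fun μ r => ?_
  simp only [rep, map_sum, map_smul, liftGens_Z, repGens, LinearMap.coe_sum, Finset.sum_apply,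
    LinearMap.smul_apply, weightedShift_single, Finsupp.smul_single', ← Finsupp.single_finsetSum,
    zWeight, Finset.mul_sum]
  congr 1
  exact Finset.sum_congr rfl fun k _ => by ring

lemma genComb_injective (hq : q ≠ 0) (hq2 : q ^ 2 ≠ 1) {a b c a' b' c' : Fin n → ℂ}
    (h : genComb q a b c = genComb q a' b' c') : a = a' ∧ b = b' ∧ c = c' := by
  have coeff (μ ν : Fin n →₀ ℤ) := congr(rep hq hq2 $h (Finsupp.single μ 1) ν)
  refine ⟨funext fun t => ?_, funext fun t => ?_,
    zWeight_injective hq (ne_one_of_sq_ne_one hq2) fun μ => ?_⟩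
  · have ht := coeff 0 (0 - Finsupp.single t 1)
    rwa [rep_genComb_apply_sub, rep_genComb_apply_sub] at ht
  · have ht := coeff 0 (0 + Finsupp.single t 1)
    rw [rep_genComb_apply_add, rep_genComb_apply_add] at ht
    exact mul_right_cancel₀
      (mul_ne_zero (inv_ne_zero (one_sub_inv_sq_ne_zero hq2)) (zpow_ne_zero _ hq)) ht
  · have hμ := coeff μ μ
    rwa [rep_genComb_apply_self, rep_genComb_apply_self] at hμ

end Representation

section Commutation

variable {n : ℕ} {q : ℂ}

lemma zWeight_sub_mul_coeff_eq_zero (hq : q ≠ 0) (hq2 : q ^ 2 ≠ 1) {u : H n q}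
    {γ : Fin n → ℂ} {l : ℂ} (h : u * ∑ k, γ k • Z n q k = l • ((∑ k, γ k • Z n q k) * u))
    (μ ν : Fin n →₀ ℤ) :
    (zWeight q γ μ - l * zWeight q γ ν) * rep hq hq2 u (Finsupp.single μ 1) ν = 0 := by
  have hμν := congr(rep hq hq2 $h (Finsupp.single μ 1) ν)
  rw [map_mul, map_smul, map_mul, Module.End.mul_apply, LinearMap.smul_apply,
    Module.End.mul_apply, rep_sum_smul_Z, weightedShift_single, add_zero, one_mul,
    ← Finsupp.smul_single_one μ (zWeight q γ μ), map_smul, Finsupp.smul_apply,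
    Finsupp.smul_apply, weightedShift_zero_apply] at hμν
  simp only [smul_eq_mul] at hμν
  linear_combination hμν

lemma mul_eq_zero_of_zWeight_sub_mul_eq_zero (hq : q ≠ 0) (hq1 : q ≠ 1) {γ : Fin n → ℂ}
    {l α : ℂ} (hl : l ≠ 1) {j : Fin n} {s : ℤ}
    (h : ∀ μ, (zWeight q γ μ - l * zWeight q γ (μ + Finsupp.single j s)) * α = 0) :
    (∀ k, k ≠ j → γ k * α = 0) ∧ γ j * α * (1 - l * q ^ s) = 0 := by
  have h₀ := h 0
  rw [zero_add, zWeight_zero, zWeight_single hq] at h₀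
  have off (k : Fin n) (hk : k ≠ j) : γ k * α = 0 := by
    have hₖ := h (Finsupp.single k 1)
    rw [zWeight_add_single hq, zWeight_single hq, Finsupp.single_eq_of_ne hk.symm,
      zpow_zero, mul_one, zpow_one] at hₖ
    have hkα : γ k * α * ((q - 1) * (1 - l)) = 0 := by linear_combination hₖ - h₀
    exact (mul_eq_zero.1 hkα).resolve_right
      (mul_ne_zero (sub_ne_zero.2 hq1) (sub_ne_zero.2 hl.symm))
  refine ⟨off, ?_⟩
  have hsum : (∑ k, γ k) * α = γ j * α := by
    rw [Finset.sum_mul, Finset.sum_eq_single j (fun k _ hk => off k hk) (by simp)]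
  linear_combination h₀ - (1 - l) * hsum

variable {a b c γ : Fin n → ℂ} {l : ℂ}

lemma genComb_mul_sum_Z_X_coeff (hq : q ≠ 0) (hq2 : q ^ 2 ≠ 1) (hl : l ≠ 1)
    (h : genComb q a b c * ∑ k, γ k • Z n q k = l • ((∑ k, γ k • Z n q k) * genComb q a b c))
    (j : Fin n) : (∀ k, k ≠ j → γ k * a j = 0) ∧ γ j * a j * (1 - l * q⁻¹) = 0 := by
  rw [← zpow_neg_one]
  refine mul_eq_zero_of_zWeight_sub_mul_eq_zero hq (ne_one_of_sq_ne_one hq2) hl fun μ => ?_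
  have hμ := zWeight_sub_mul_coeff_eq_zero hq hq2 h μ (μ - Finsupp.single j 1)
  rwa [rep_genComb_apply_sub, sub_eq_add_neg μ, ← Finsupp.single_neg] at hμ

lemma genComb_mul_sum_Z_Y_coeff (hq : q ≠ 0) (hq2 : q ^ 2 ≠ 1) (hl : l ≠ 1)
    (h : genComb q a b c * ∑ k, γ k • Z n q k = l • ((∑ k, γ k • Z n q k) * genComb q a b c))
    (j : Fin n) : (∀ k, k ≠ j → γ k * b j = 0) ∧ γ j * b j * (1 - l * q) = 0 := by
  rw [← zpow_one q]
  refine mul_eq_zero_of_zWeight_sub_mul_eq_zero hq (ne_one_of_sq_ne_one hq2) hl fun μ => ?_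
  have hμ := zWeight_sub_mul_coeff_eq_zero hq hq2 h μ (μ + Finsupp.single j 1)
  rw [rep_genComb_apply_add, ← mul_assoc] at hμ
  exact (mul_eq_zero.1 hμ).resolve_right
    (mul_ne_zero (inv_ne_zero (one_sub_inv_sq_ne_zero hq2)) (zpow_ne_zero _ hq))

lemma genComb_mul_sum_Z_Z_coeff (hq : q ≠ 0) (hq2 : q ^ 2 ≠ 1) (hl : l ≠ 1)
    (h : genComb q a b c * ∑ k, γ k • Z n q k = l • ((∑ k, γ k • Z n q k) * genComb q a b c))
    (μ : Fin n →₀ ℤ) : zWeight q γ μ * zWeight q c μ = 0 := by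
  have hμ := zWeight_sub_mul_coeff_eq_zero hq hq2 h μ μ
  rw [rep_genComb_apply_self, ← one_sub_mul, mul_assoc] at hμ
  exact (mul_eq_zero.1 hμ).resolve_left (sub_ne_zero.2 hl.symm)

lemma sum_single_smul_Z (t : Fin n) :
    ∑ k, (Pi.single t 1 : Fin n → ℂ) k • Z n q k = Z n q t := by
  simp [Pi.single_apply]

lemma zWeight_single_one (t : Fin n) (μ : Fin n →₀ ℤ) :
    zWeight q (Pi.single t 1) μ = q ^ μ t := by
  simp [zWeight, Pi.single_apply]

lemma genComb_mul_Z (hq : q ≠ 0) (hq2 : q ^ 2 ≠ 1) (hl : l ≠ 1) {t : Fin n}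
    (h : genComb q a b c * Z n q t = l • (Z n q t * genComb q a b c)) :
    (∀ j, j ≠ t → a j = 0 ∧ b j = 0) ∧ a t * (1 - l * q⁻¹) = 0 ∧ b t * (1 - l * q) = 0 ∧
      c = 0 := by
  rw [← sum_single_smul_Z t] at h
  have hX := genComb_mul_sum_Z_X_coeff hq hq2 hl h
  have hY := genComb_mul_sum_Z_Y_coeff hq hq2 hl h
  refine ⟨fun j hj => ⟨?_, ?_⟩, ?_, ?_, ?_⟩
  · simpa using (hX j).1 t hj.symm
  · simpa using (hY j).1 t hj.symm
  · simpa using (hX t).2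
  · simpa using (hY t).2
  · refine zWeight_injective hq (ne_one_of_sq_ne_one hq2) fun μ => ?_
    have hμ := genComb_mul_sum_Z_Z_coeff hq hq2 hl h μ
    rw [zWeight_single_one] at hμ
    simpa [zWeight, zpow_ne_zero _ hq] using hμ

lemma genComb_eq_smul_X_of_mul_Z (hq : q ≠ 0) (hq2 : q ^ 2 ≠ 1) {t : Fin n}
    (h : genComb q a b c * Z n q t = q • (Z n q t * genComb q a b c)) :
    genComb q a b c = a t • X n q t := by
  obtain ⟨hoff, -, hbt, rfl⟩ := genComb_mul_Z hq hq2 (ne_one_of_sq_ne_one hq2) h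
  have hb : b = 0 := funext fun j => by
    rcases eq_or_ne j t with rfl | hj
    · simpa [← sq, sub_ne_zero.2 (Ne.symm hq2)] using hbt
    · exact (hoff j hj).2
  subst hb
  simp only [genComb, Pi.zero_apply, zero_smul, Finset.sum_const_zero, add_zero]
  exact Finset.sum_eq_single t (fun j _ hj => by rw [(hoff j hj).1, zero_smul]) (by simp)

lemma genComb_eq_smul_Y_of_mul_Z (hq : q ≠ 0) (hq2 : q ^ 2 ≠ 1) {t : Fin n}
    (h : genComb q a b c * Z n q t = q⁻¹ • (Z n q t * genComb q a b c)) :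
    genComb q a b c = b t • Y n q t := by
  have hl : q⁻¹ ≠ 1 := inv_ne_one.2 (ne_one_of_sq_ne_one hq2)
  obtain ⟨hoff, hat, -, rfl⟩ := genComb_mul_Z hq hq2 hl h
  have ha : a = 0 := funext fun j => by
    rcases eq_or_ne j t with rfl | hj
    · rw [← sq] at hat
      exact (mul_eq_zero.1 hat).resolve_right (one_sub_inv_sq_ne_zero hq2)
    · exact (hoff j hj).1
  subst ha
  simp only [genComb, Pi.zero_apply, zero_smul, Finset.sum_const_zero, zero_add, add_zero]
  exact Finset.sum_eq_single t (fun j _ hj => by rw [(hoff j hj).2, zero_smul]) (by simp)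

lemma eq_zero_of_mul_sum_Z (hq : q ≠ 0) (hq2 : q ^ 2 ≠ 1)
    (h : genComb q a b c * ∑ k, γ k • Z n q k = q • ((∑ k, γ k • Z n q k) * genComb q a b c))
    {k₁ k₂ : Fin n} (hk : k₁ ≠ k₂) (h₁ : γ k₁ ≠ 0) (h₂ : γ k₂ ≠ 0) : a = 0 ∧ b = 0 := by
  have hX := genComb_mul_sum_Z_X_coeff hq hq2 (ne_one_of_sq_ne_one hq2) h
  have hY := genComb_mul_sum_Z_Y_coeff hq hq2 (ne_one_of_sq_ne_one hq2) h
  have hq2' : 1 - q * q ≠ 0 := by rw [← sq]; exact sub_ne_zero.2 (Ne.symm hq2)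
  refine ⟨funext fun j => ?_, funext fun j => ?_⟩
  · rcases eq_or_ne j k₁ with rfl | hj
    · exact (mul_eq_zero.1 ((hX j).1 k₂ hk.symm)).resolve_left h₂
    · exact (mul_eq_zero.1 ((hX j).1 k₁ hj.symm)).resolve_left h₁
  · rcases eq_or_ne j k₁ with rfl | hj
    · exact (mul_eq_zero.1 ((mul_eq_zero.1 (hY j).2).resolve_right hq2')).resolve_left h₁
    · exact (mul_eq_zero.1 ((hY j).1 k₁ hj.symm)).resolve_left h₁

end Commutation

section Characters

variable {n : ℕ} {q : ℂ}

variable (q) in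
def xChar (j : Fin n) : H n q →ₐ[ℂ] ℂ :=
  liftGens (fun g => if g = Sum.inl j then 1 else 0) fun a b h => by
    induction h <;> simp [fX, fY, fZ, mul_comm]

variable (q) in
def yChar (j : Fin n) : H n q →ₐ[ℂ] ℂ :=
  liftGens (fun g => if g = Sum.inr (Sum.inl j) then 1 else 0) fun a b h => by
    induction h <;> simp [fX, fY, fZ, mul_comm]

lemma xChar_genComb (j : Fin n) (a b c : Fin n → ℂ) : xChar q j (genComb q a b c) = a j := by
  simp [xChar, genComb]

lemma yChar_genComb (j : Fin n) (a b c : Fin n → ℂ) : yChar q j (genComb q a b c) = b j := by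
  simp [yChar, genComb]

lemma algHom_apply_Z (hq1 : q ≠ 1) (χ : H n q →ₐ[ℂ] ℂ) (i : Fin n) : χ (Z n q i) = 0 := by
  have hYZ := congrArg χ (Y_mul_Z (q := q) i)
  have hXY := congrArg χ (X_mul_Y (q := q) i)
  simp only [map_mul, map_smul, map_add, smul_eq_mul] at hYZ hXY
  have hyz : χ (Y n q i) * χ (Z n q i) * (1 - q⁻¹) = 0 := by linear_combination hYZ
  have hyz' := (mul_eq_zero.1 hyz).resolve_right (sub_ne_zero.2 (inv_ne_one.2 hq1).symm)
  exact pow_eq_zero_iff two_ne_zero |>.1 (by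
    linear_combination -χ (Z n q i) * hXY + (1 - q⁻¹) * χ (X n q i) * hyz')

end Characters

section Spans

variable {n : ℕ} {q : ℂ}

lemma mem_genSpan_iff {v : H n q} : v ∈ genSpan n q ↔ ∃ a b c, genComb q a b c = v := by
  simp only [genSpan, Submodule.span_union, Submodule.mem_sup,
    Submodule.mem_span_range_iff_exists_fun, genComb]
  constructor
  · rintro ⟨_, ⟨_, ⟨a, rfl⟩, _, ⟨b, rfl⟩, rfl⟩, _, ⟨c, rfl⟩, rfl⟩
    exact ⟨a, b, c, rfl⟩
  · rintro ⟨a, b, c, rfl⟩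
    exact ⟨_, ⟨_, ⟨a, rfl⟩, _, ⟨b, rfl⟩, rfl⟩, _, ⟨c, rfl⟩, rfl⟩

lemma genComb_mem_genSpan (a b c : Fin n → ℂ) : genComb q a b c ∈ genSpan n q :=
  mem_genSpan_iff.2 ⟨a, b, c, rfl⟩

lemma genComb_single_X (i : Fin n) (α : ℂ) : genComb q (Pi.single i α) 0 0 = α • X n q i := by
  simp [genComb, Pi.single_apply]

lemma genComb_single_Y (i : Fin n) (β : ℂ) : genComb q 0 (Pi.single i β) 0 = β • Y n q i := by
  simp [genComb, Pi.single_apply]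

lemma genComb_zero_zero (γ : Fin n → ℂ) : genComb q 0 0 γ = ∑ k, γ k • Z n q k := by
  simp [genComb]

lemma X_mem_genSpan (i : Fin n) : X n q i ∈ genSpan n q := by
  simpa [genComb_single_X] using genComb_mem_genSpan (q := q) (Pi.single i 1) 0 0

lemma Y_mem_genSpan (i : Fin n) : Y n q i ∈ genSpan n q := by
  simpa [genComb_single_Y] using genComb_mem_genSpan (q := q) 0 (Pi.single i 1) 0

lemma Z_mem_genSpan (i : Fin n) : Z n q i ∈ genSpan n q := by
  simpa [genComb_zero_zero, Pi.single_apply] using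
    genComb_mem_genSpan (q := q) 0 0 (Pi.single i 1)

variable (n q) in
def zSpan : Submodule ℂ (H n q) := Submodule.span ℂ (Set.range (Z n q))

lemma mem_zSpan_iff {v : H n q} : v ∈ zSpan n q ↔ ∃ γ : Fin n → ℂ, ∑ k, γ k • Z n q k = v :=
  Submodule.mem_span_range_iff_exists_fun ℂ

lemma smul_X_inj (hq : q ≠ 0) (hq2 : q ^ 2 ≠ 1) {α β : ℂ} {k k' : Fin n} (hα : α ≠ 0)
    (h : α • X n q k = β • X n q k') : k = k' ∧ α = β := by
  rw [← genComb_single_X, ← genComb_single_X] at h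
  have hs := congrFun (genComb_injective hq hq2 h).1 k
  rcases eq_or_ne k k' with rfl | hk
  · simpa using hs
  · simp [Pi.single_eq_of_ne hk, hα] at hs

lemma smul_Y_inj (hq : q ≠ 0) (hq2 : q ^ 2 ≠ 1) {α β : ℂ} {k k' : Fin n} (hα : α ≠ 0)
    (h : α • Y n q k = β • Y n q k') : k = k' ∧ α = β := by
  rw [← genComb_single_Y, ← genComb_single_Y] at h
  have hs := congrFun (genComb_injective hq hq2 h).2.1 k
  rcases eq_or_ne k k' with rfl | hk
  · simpa using hs
  · simp [Pi.single_eq_of_ne hk, hα] at hs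

lemma X_ne_zero (hq : q ≠ 0) (hq2 : q ^ 2 ≠ 1) (i : Fin n) : X n q i ≠ 0 := fun h =>
  one_ne_zero (smul_X_inj hq hq2 one_ne_zero
    (by simp [h] : (1 : ℂ) • X n q i = (0 : ℂ) • X n q i)).2

lemma Y_ne_zero (hq : q ≠ 0) (hq2 : q ^ 2 ≠ 1) (i : Fin n) : Y n q i ≠ 0 := fun h =>
  one_ne_zero (smul_Y_inj hq hq2 one_ne_zero
    (by simp [h] : (1 : ℂ) • Y n q i = (0 : ℂ) • Y n q i)).2

lemma Z_ne_zero (hq : q ≠ 0) (hq2 : q ^ 2 ≠ 1) (i : Fin n) : Z n q i ≠ 0 := by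
  intro h
  have h' : genComb q 0 0 (Pi.single i 1) = genComb q 0 0 0 := by
    simp [genComb_zero_zero, Pi.single_apply, h]
  simpa using congrFun (genComb_injective hq hq2 h').2.2 i

lemma X_not_mem_zSpan (hq : q ≠ 0) (hq2 : q ^ 2 ≠ 1) (i : Fin n) : X n q i ∉ zSpan n q := by
  rintro hX
  obtain ⟨γ, hγ⟩ := mem_zSpan_iff.1 hX
  rw [← genComb_zero_zero, ← one_smul ℂ (X n q i), ← genComb_single_X] at hγ
  simpa using congrFun (genComb_injective hq hq2 hγ).1 i

end Spans

section GradedAutomorphisms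

variable {n : ℕ} {q : ℂ}

lemma map_mem_genSpan {φ : H n q ≃ₐ[ℂ] H n q} (hφ : φ ∈ gradedAut n q) {v : H n q}
    (hv : v ∈ genSpan n q) : φ v ∈ genSpan n q := by
  rw [← show (genSpan n q).map φ.toLinearMap = genSpan n q from hφ]
  exact Submodule.mem_map_of_mem hv

/-- The characters dual to `x_j` and `y_j`, composed with `φ`, still kill `z_i`: so `φ z_i` has
no `x`- or `y`-components. -/
lemma map_Z_mem_zSpan (hq1 : q ≠ 1) {φ : H n q ≃ₐ[ℂ] H n q} (hφ : φ ∈ gradedAut n q)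
    (i : Fin n) : φ (Z n q i) ∈ zSpan n q := by
  obtain ⟨a, b, c, habc⟩ := mem_genSpan_iff.1 (map_mem_genSpan hφ (Z_mem_genSpan i))
  have ha : a = 0 := funext fun j => by
    rw [← xChar_genComb j a b c, habc]
    exact algHom_apply_Z hq1 ((xChar q j).comp φ.toAlgHom) i
  have hb : b = 0 := funext fun j => by
    rw [← yChar_genComb j a b c, habc]
    exact algHom_apply_Z hq1 ((yChar q j).comp φ.toAlgHom) i
  subst ha hb
  exact mem_zSpan_iff.2 ⟨c, by rw [← genComb_zero_zero, habc]⟩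

lemma map_X_not_mem_zSpan (hq : q ≠ 0) (hq2 : q ^ 2 ≠ 1) {φ : H n q ≃ₐ[ℂ] H n q}
    (hφ : φ ∈ gradedAut n q) (i : Fin n) : φ (X n q i) ∉ zSpan n q := by
  intro hX
  have hle : (zSpan n q).map (φ⁻¹ : H n q ≃ₐ[ℂ] H n q).toLinearMap ≤ zSpan n q :=
    (Submodule.map_span_le _ _ _).2 fun _ ⟨k, hk⟩ =>
      hk ▸ map_Z_mem_zSpan (ne_one_of_sq_ne_one hq2) ((gradedAut n q).inv_mem hφ) k
  refine X_not_mem_zSpan hq hq2 i ?_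
  simpa using hle (Submodule.mem_map_of_mem hX)

end GradedAutomorphisms

section ScalingAutomorphisms

variable {n : ℕ} {q : ℂ}

variable (q) in
def scaleGens (A B : Fin n → ℂˣ) (π : Equiv.Perm (Fin n)) : GenIdx n → H n q
  | Sum.inl i => (A (π i) : ℂ) • X n q (π i)
  | Sum.inr (Sum.inl i) => (B (π i) : ℂ) • Y n q (π i)
  | Sum.inr (Sum.inr i) => (A (π i) * B (π i) : ℂ) • Z n q (π i)

variable (q) in
def scaleHom (A B : Fin n → ℂˣ) (π : Equiv.Perm (Fin n)) : H n q →ₐ[ℂ] H n q :=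
  liftGens (scaleGens q A B π) fun a b h => by
    induction h <;>
      simp only [map_mul, map_smul, map_add, FreeAlgebra.lift_ι_apply, fX, fY, fZ, scaleGens,
        smul_mul_smul_comm]
    case xx i j => rw [X_mul_X_comm]; module
    case yy i j => rw [Y_mul_Y_comm]; module
    case zz i j => rw [Z_mul_Z_comm]; module
    case xz i => rw [X_mul_Z]; module
    case yz i => rw [Y_mul_Z]; module
    case xy i => rw [X_mul_Y]; module
    case xyne i j hij => rw [X_mul_Y_comm_of_ne (π.injective.ne hij)]; module
    case xzne i j hij => rw [X_mul_Z_comm_of_ne (π.injective.ne hij)]; module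
    case yzne i j hij => rw [Y_mul_Z_comm_of_ne (π.injective.ne hij)]; module

@[simp] lemma scaleHom_X (A B : Fin n → ℂˣ) (π : Equiv.Perm (Fin n)) (i : Fin n) :
    scaleHom q A B π (X n q i) = (A (π i) : ℂ) • X n q (π i) := by
  simp [scaleHom, scaleGens]

@[simp] lemma scaleHom_Y (A B : Fin n → ℂˣ) (π : Equiv.Perm (Fin n)) (i : Fin n) :
    scaleHom q A B π (Y n q i) = (B (π i) : ℂ) • Y n q (π i) := by
  simp [scaleHom, scaleGens]

@[simp] lemma scaleHom_Z (A B : Fin n → ℂˣ) (π : Equiv.Perm (Fin n)) (i : Fin n) :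
    scaleHom q A B π (Z n q i) = (A (π i) * B (π i) : ℂ) • Z n q (π i) := by
  simp [scaleHom, scaleGens]

variable (q) in
def scaleMonoidHom :
    SemidirectProduct ((Fin n → ℂˣ) × (Fin n → ℂˣ)) (Equiv.Perm (Fin n)) (permAction n) →*
      (H n q →ₐ[ℂ] H n q) where
  toFun p := scaleHom q p.left.1 p.left.2 p.right
  map_one' := algHom_ext (fun i => by simp) (fun i => by simp)
  map_mul' p p' := by
    refine algHom_ext (fun i => ?_) (fun i => ?_) <;>
      simp only [SemidirectProduct.mul_left, SemidirectProduct.mul_right] <;>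
      simp [permAction, smul_smul, mul_comm]

variable (q) in
def scaleAut :
    SemidirectProduct ((Fin n → ℂˣ) × (Fin n → ℂˣ)) (Equiv.Perm (Fin n)) (permAction n) →*
      (H n q ≃ₐ[ℂ] H n q) :=
  (AlgEquiv.algHomUnitsEquiv ℂ (H n q)).toMonoidHom.comp (scaleMonoidHom q).toHomUnits

lemma scaleAut_apply (p : SemidirectProduct ((Fin n → ℂˣ) × (Fin n → ℂˣ)) (Equiv.Perm (Fin n))
    (permAction n)) (x : H n q) : scaleAut q p x = scaleHom q p.left.1 p.left.2 p.right x :=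
  rfl

lemma mem_gradedAut_of_map_le {φ : H n q ≃ₐ[ℂ] H n q}
    (h : (genSpan n q).map φ.toLinearMap ≤ genSpan n q)
    (h' : (genSpan n q).map (φ⁻¹ : H n q ≃ₐ[ℂ] H n q).toLinearMap ≤ genSpan n q) :
    φ ∈ gradedAut n q :=
  h.antisymm fun v hv => ⟨φ⁻¹ v, h' (Submodule.mem_map_of_mem hv), by simp⟩

lemma map_scaleAut_genSpan_le
    (p : SemidirectProduct ((Fin n → ℂˣ) × (Fin n → ℂˣ)) (Equiv.Perm (Fin n)) (permAction n)) :
    (genSpan n q).map (scaleAut q p).toLinearMap ≤ genSpan n q := by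
  refine (Submodule.map_span_le _ _ _).2 ?_
  rintro _ ((⟨i, rfl⟩ | ⟨i, rfl⟩) | ⟨i, rfl⟩) <;>
    simp only [AlgEquiv.toLinearMap_apply, scaleAut_apply, scaleHom_X, scaleHom_Y, scaleHom_Z]
  · exact Submodule.smul_mem _ _ (X_mem_genSpan _)
  · exact Submodule.smul_mem _ _ (Y_mem_genSpan _)
  · exact Submodule.smul_mem _ _ (Z_mem_genSpan _)

variable (q) in
def scaleGradedAut :
    SemidirectProduct ((Fin n → ℂˣ) × (Fin n → ℂˣ)) (Equiv.Perm (Fin n)) (permAction n) →*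
      gradedAut n q :=
  (scaleAut q).codRestrict _ fun p =>
    mem_gradedAut_of_map_le (map_scaleAut_genSpan_le p)
      (by simpa only [map_inv] using map_scaleAut_genSpan_le p⁻¹)

lemma scaleGradedAut_injective (hq : q ≠ 0) (hq2 : q ^ 2 ≠ 1) :
    Function.Injective (scaleGradedAut (n := n) q) := by
  refine (injective_iff_map_eq_one _).2 fun p hp => ?_
  have h1 (x : H n q) : scaleHom q p.left.1 p.left.2 p.right x = x :=
    congr($(congrArg Subtype.val hp) x)
  have hX (i : Fin n) := smul_X_inj hq hq2 (Units.ne_zero _)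
    (((scaleHom_X _ _ _ i).symm.trans (h1 (X n q i))).trans (one_smul ℂ _).symm)
  have hY (i : Fin n) := smul_Y_inj hq hq2 (Units.ne_zero _)
    (((scaleHom_Y _ _ _ i).symm.trans (h1 (Y n q i))).trans (one_smul ℂ _).symm)
  have hπ : p.right = 1 := Equiv.ext fun i => (hX i).1
  refine SemidirectProduct.ext (Prod.ext (funext fun k => Units.ext ?_)
    (funext fun k => Units.ext ?_)) hπ
  · simpa [hπ] using (hX k).2
  · simpa [hπ] using (hY k).2

end ScalingAutomorphisms

section Classification

variable {n : ℕ} {q : ℂ} {φ : H n q ≃ₐ[ℂ] H n q}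

/-- If `φ z_i` involved two of the `z_k`, then `φ x_i · φ z_i = q φ z_i · φ x_i` would force
`φ x_i`, hence `x_i`, into the span of the `z_k`. -/
lemma exists_map_Z_eq_smul (hq : q ≠ 0) (hq2 : q ^ 2 ≠ 1) (hφ : φ ∈ gradedAut n q)
    (i : Fin n) : ∃ (t : Fin n) (γ : ℂ), γ ≠ 0 ∧ φ (Z n q i) = γ • Z n q t := by
  obtain ⟨γ, hγ⟩ := mem_zSpan_iff.1 (map_Z_mem_zSpan (ne_one_of_sq_ne_one hq2) hφ i)
  obtain ⟨a, b, c, hu⟩ := mem_genSpan_iff.1 (map_mem_genSpan hφ (X_mem_genSpan i))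
  have hXZ : genComb q a b c * ∑ k, γ k • Z n q k =
      q • ((∑ k, γ k • Z n q k) * genComb q a b c) := by
    rw [hu, hγ, ← map_mul, ← map_mul, X_mul_Z, map_smul]
  obtain ⟨t, ht⟩ : ∃ t, γ t ≠ 0 := by
    by_contra! h0
    refine Z_ne_zero hq hq2 i (φ.injective ?_)
    simp [← hγ, h0]
  have hsupp (k : Fin n) (hk : k ≠ t) : γ k = 0 := by
    by_contra hk'
    obtain ⟨rfl, rfl⟩ := eq_zero_of_mul_sum_Z hq hq2 hXZ hk hk' ht
    exact map_X_not_mem_zSpan hq hq2 hφ i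
      (mem_zSpan_iff.2 ⟨c, by rw [← hu, genComb_zero_zero]⟩)
  refine ⟨t, γ t, ht, ?_⟩
  rw [← hγ]
  exact Finset.sum_eq_single t (fun k _ hk => by rw [hsupp k hk, zero_smul]) (by simp)

lemma exists_map_X_map_Y (hq : q ≠ 0) (hq2 : q ^ 2 ≠ 1) (hφ : φ ∈ gradedAut n q)
    (i : Fin n) : ∃ (t : Fin n) (α β : ℂ), α ≠ 0 ∧ β ≠ 0 ∧
      φ (X n q i) = α • X n q t ∧ φ (Y n q i) = β • Y n q t := by
  obtain ⟨t, γ, hγ0, hγ⟩ := exists_map_Z_eq_smul hq hq2 hφ i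
  obtain ⟨a, b, c, hu⟩ := mem_genSpan_iff.1 (map_mem_genSpan hφ (X_mem_genSpan i))
  obtain ⟨a', b', c', hv⟩ := mem_genSpan_iff.1 (map_mem_genSpan hφ (Y_mem_genSpan i))
  have hXZ : genComb q a b c * Z n q t = q • (Z n q t * genComb q a b c) := by
    have h := congrArg φ (X_mul_Z i)
    rw [map_mul, map_smul, map_mul, hγ, ← hu, mul_smul_comm, smul_mul_assoc, smul_comm] at h
    exact smul_right_injective (H n q) hγ0 h
  have hYZ : genComb q a' b' c' * Z n q t = q⁻¹ • (Z n q t * genComb q a' b' c') := by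
    have h := congrArg φ (Y_mul_Z i)
    rw [map_mul, map_smul, map_mul, hγ, ← hv, mul_smul_comm, smul_mul_assoc, smul_comm] at h
    exact smul_right_injective (H n q) hγ0 h
  rw [genComb_eq_smul_X_of_mul_Z hq hq2 hXZ] at hu
  rw [genComb_eq_smul_Y_of_mul_Z hq hq2 hYZ] at hv
  refine ⟨t, a t, b' t, ?_, ?_, hu.symm, hv.symm⟩
  · rintro h0
    exact X_ne_zero hq hq2 i (φ.injective (by rw [← hu, h0, zero_smul, map_zero]))
  · rintro h0
    exact Y_ne_zero hq hq2 i (φ.injective (by rw [← hv, h0, zero_smul, map_zero]))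

lemma scaleGradedAut_surjective (hq : q ≠ 0) (hq2 : q ^ 2 ≠ 1) :
    Function.Surjective (scaleGradedAut (n := n) q) := by
  rintro ⟨φ, hφ⟩
  choose t α β hα hβ hX hY using exists_map_X_map_Y hq hq2 hφ
  have ht : Function.Injective t := fun i i' h =>
    (smul_X_inj hq hq2 (hα i') (φ.injective (by simp [hX, h, smul_smul, mul_comm]) :
      α i' • X n q i = α i • X n q i')).1
  let π := Equiv.ofBijective t (Finite.injective_iff_bijective.1 ht)
  refine ⟨⟨(fun k => Units.mk0 (α (π.symm k)) (hα _), fun k => Units.mk0 (β (π.symm k)) (hβ _)),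
    π⟩, Subtype.ext (AlgEquiv.coe_toAlgHom_injective (algHom_ext (fun i => ?_) (fun i => ?_)))⟩ <;>
    simp [scaleGradedAut, scaleAut_apply, hX, hY, π]

end Classification

theorem gradedAut_iso_semidirectProduct_general (n : ℕ) (q : ℂ) (hq : q ≠ 0)
    (hq' : NotRootOfUnity q) :
    Nonempty ((gradedAut n q) ≃*
      SemidirectProduct ((Fin n → ℂˣ) × (Fin n → ℂˣ)) (Equiv.Perm (Fin n))
        (permAction n)) := by
  have hq2 : q ^ 2 ≠ 1 := hq' 2 one_le_two
  exact ⟨(MulEquiv.ofBijective (scaleGradedAut q)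
    ⟨scaleGradedAut_injective hq hq2, scaleGradedAut_surjective hq hq2⟩).symm⟩

/-- For `n ≥ 1` and `q` nonzero and not a root of unity, the group of
graded automorphisms of `𝔥_n(q)` is isomorphic to the semidirect product
`((Fin n → ℂˣ) × (Fin n → ℂˣ)) ⋊ Equiv.Perm (Fin n)`. -/
theorem gradedAut_iso_semidirectProduct (n : ℕ) (hn : 1 ≤ n) (q : ℂ) (hq : q ≠ 0)
    (hq' : NotRootOfUnity q) :
    Nonempty ((gradedAut n q) ≃*
      SemidirectProduct ((Fin n → ℂˣ) × (Fin n → ℂˣ)) (Equiv.Perm (Fin n))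
        (permAction n)) :=
  gradedAut_iso_semidirectProduct_general n q hq hq'

end QHeisenberg
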